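/- The bilinear form φ^{(2)} on 𝔡_t^{(n)} defined by φ^{(2)}(M1 ⊗ D^{k1}Z^{l1}, M2 ⊗ D^{k2}Z^{l2}) = k1 · t^{k1·l1} · δ_{k1,-k2} · δ_{l1,-l2} · tr(M1·M2) is a Lie algebra 2-cocycle on 𝔡_t^{(n)} with values in ℂ. -/

import Mathlib

/-!
Both identities are additive in each argument, so it suffices to check them on elementary
tensors `M ⊗ D^k Z^l`. On these, `φ^{(2)}` pairs only opposite degrees, and antisymmetry is
`tr(M₁M₂) = tr(M₂M₁)`. For the cocycle identity only triples of degrees `p + q + r = 0`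
contribute, and then `φ^{(2)}([A_p, B_q], C_r) = -r₁ (t^e tr(ABC) - t^{e'} tr(BAC))` with
exponents `e, e'` that do not change under cyclic rotation of `(p, q, r)`; summing over the
rotations gives the factor `-(p₁ + q₁ + r₁) = 0`.
-/

/-- The matrix quantum torus `𝔡_t^{(n)} = M_n(ℂ) ⊗ 𝔡_t`, realized as finitely supported
families of matrices indexed by `(k,l) ∈ ℤ²`, where `(k,l)` records `D^k Z^l`. -/
abbrev DT (n : ℕ) := (ℤ × ℤ) →₀ Matrix (Fin n) (Fin n) ℂ

/-- The associative product of `𝔡_t^{(n)}`: since `DZ = t·ZD`, one has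
`(M1 ⊗ D^{k1}Z^{l1})(M2 ⊗ D^{k2}Z^{l2}) = t^{-l1·k2} M1M2 ⊗ D^{k1+k2}Z^{l1+l2}`. -/
noncomputable def dmul (n : ℕ) (t : ℂ) (X Y : DT n) : DT n :=
  X.sum fun p A => Y.sum fun q B =>
    Finsupp.single (p.1 + q.1, p.2 + q.2) (t ^ (-(p.2 * q.1)) • (A * B))

/-- The commutator Lie bracket on `𝔡_t^{(n)}`. -/
noncomputable def dbr (n : ℕ) (t : ℂ) (X Y : DT n) : DT n :=
  dmul n t X Y - dmul n t Y X

/-- The bilinear form `φ^{(2)}`, given on basis elements by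
`φ^{(2)}(M1 ⊗ D^{k1}Z^{l1}, M2 ⊗ D^{k2}Z^{l2}) = k1·t^{k1·l1}·δ_{k1,-k2}·δ_{l1,-l2}·tr(M1M2)`. -/
noncomputable def phi2 (n : ℕ) (t : ℂ) (X Y : DT n) : ℂ :=
  X.sum fun p A => (p.1 : ℂ) * t ^ (p.1 * p.2) * (A * Y (-p.1, -p.2)).trace

theorem Finsupp.eq_zero_of_map_add_of_map_single {α M N : Type*} [AddZeroClass M]
    [AddCommGroup N]
    (f : (α →₀ M) → N) (hadd : ∀ x y, f (x + y) = f x + f y)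
    (hsingle : ∀ a m, f (Finsupp.single a m) = 0) : ∀ x, f x = 0 :=
  DFunLike.congr_fun (Finsupp.addHom_ext (by simpa using hsingle) : AddMonoidHom.mk' f hadd = 0)

section

variable {n : ℕ} {t : ℂ}

lemma phi2_add_left (X X' Y : DT n) :
    phi2 n t (X + X') Y = phi2 n t X Y + phi2 n t X' Y :=
  Finsupp.sum_add_index' (by simp) fun _ _ _ => by simp [Matrix.add_mul, mul_add]

lemma phi2_add_right (X Y Y' : DT n) :
    phi2 n t X (Y + Y') = phi2 n t X Y + phi2 n t X Y' := by
  simp only [phi2, Finsupp.coe_add, Pi.add_apply, Matrix.trace_add, mul_add,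
    Finsupp.sum_add]

lemma dmul_add_left (X X' Y : DT n) :
    dmul n t (X + X') Y = dmul n t X Y + dmul n t X' Y :=
  Finsupp.sum_add_index' (by simp) fun _ _ _ => by
    simp [Matrix.add_mul, smul_add, Finsupp.single_add, Finsupp.sum_add]

lemma dmul_add_right (X Y Y' : DT n) :
    dmul n t X (Y + Y') = dmul n t X Y + dmul n t X Y' := by
  simp only [dmul, ← Finsupp.sum_add]
  exact Finsupp.sum_congr fun _ _ => Finsupp.sum_add_index' (by simp) fun _ _ _ => by
    simp [Matrix.mul_add, smul_add, Finsupp.single_add]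

lemma dbr_add_left (X X' Y : DT n) :
    dbr n t (X + X') Y = dbr n t X Y + dbr n t X' Y := by
  simp only [dbr, dmul_add_left, dmul_add_right]; abel

lemma dbr_add_right (X Y Y' : DT n) :
    dbr n t X (Y + Y') = dbr n t X Y + dbr n t X Y' := by
  simp only [dbr, dmul_add_left, dmul_add_right]; abel

lemma dbr_single_single (p q : ℤ × ℤ) (A B : Matrix (Fin n) (Fin n) ℂ) :
    dbr n t (Finsupp.single p A) (Finsupp.single q B) =
      Finsupp.single (p + q) (t ^ (-(p.2 * q.1)) • (A * B) - t ^ (-(q.2 * p.1)) • (B * A)) := by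
  simp only [dbr, dmul, Finsupp.sum_single_index, Matrix.zero_mul, Matrix.mul_zero,
    Finsupp.single_zero, smul_zero, Finsupp.single_sub, add_comm q.1, add_comm q.2]
  rfl

lemma phi2_single_single_self_neg (p : ℤ × ℤ) (A B : Matrix (Fin n) (Fin n) ℂ) :
    phi2 n t (Finsupp.single p A) (Finsupp.single (-p) B) =
      p.1 * t ^ (p.1 * p.2) * (A * B).trace := by
  simp [phi2, ← Prod.neg_mk]

lemma phi2_single_single_of_add_ne_zero {p q : ℤ × ℤ} (h : p + q ≠ 0)
    (A B : Matrix (Fin n) (Fin n) ℂ) :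
    phi2 n t (Finsupp.single p A) (Finsupp.single q B) = 0 := by
  rw [phi2, Finsupp.sum_single_index (by simp), Finsupp.single_eq_of_ne]
  · simp
  · rintro rfl; exact h (by ext <;> simp)

lemma phi2_single_single_antisymm (p q : ℤ × ℤ) (A B : Matrix (Fin n) (Fin n) ℂ) :
    phi2 n t (Finsupp.single p A) (Finsupp.single q B) =
      -phi2 n t (Finsupp.single q B) (Finsupp.single p A) := by
  by_cases h : p + q = 0
  · obtain rfl : q = -p := eq_neg_of_add_eq_zero_right h
    have h' := phi2_single_single_self_neg (t := t) (-p) B A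
    rw [neg_neg] at h'
    rw [h', phi2_single_single_self_neg, Matrix.trace_mul_comm]
    simp only [Prod.fst_neg, Prod.snd_neg, neg_mul_neg, Int.cast_neg]
    ring
  · rw [phi2_single_single_of_add_ne_zero h,
      phi2_single_single_of_add_ne_zero (by rwa [add_comm]), neg_zero]

lemma phi2_dbr_single_single (ht : t ≠ 0) {p q r : ℤ × ℤ} (h : p + q + r = 0)
    (A B C : Matrix (Fin n) (Fin n) ℂ) :
    phi2 n t (dbr n t (Finsupp.single p A) (Finsupp.single q B)) (Finsupp.single r C) =
      -r.1 * (t ^ (p.1 * p.2 + q.1 * q.2 + p.1 * q.2) * (A * B * C).trace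
        - t ^ (p.1 * p.2 + q.1 * q.2 + q.1 * p.2) * (B * A * C).trace) := by
  obtain rfl : r = -(p + q) := eq_neg_of_add_eq_zero_right h
  rw [dbr_single_single, phi2_single_single_self_neg]
  simp only [Matrix.sub_mul, Matrix.smul_mul, Matrix.trace_sub, Matrix.trace_smul, smul_eq_mul,
    Prod.fst_neg, Prod.fst_add, Prod.snd_add, Int.cast_add, Int.cast_neg, neg_neg]
  rw [show p.1 * p.2 + q.1 * q.2 + p.1 * q.2 = (p.1 + q.1) * (p.2 + q.2) + -(p.2 * q.1) by ring,
    show p.1 * p.2 + q.1 * q.2 + q.1 * p.2 = (p.1 + q.1) * (p.2 + q.2) + -(q.2 * p.1) by ring,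
    zpow_add₀ ht, zpow_add₀ ht]
  ring

lemma phi2_dbr_single_cyclic (ht : t ≠ 0) (p q r : ℤ × ℤ)
    (A B C : Matrix (Fin n) (Fin n) ℂ) :
    phi2 n t (dbr n t (Finsupp.single p A) (Finsupp.single q B)) (Finsupp.single r C)
      + phi2 n t (dbr n t (Finsupp.single q B) (Finsupp.single r C)) (Finsupp.single p A)
      + phi2 n t (dbr n t (Finsupp.single r C) (Finsupp.single p A)) (Finsupp.single q B) = 0 := by
  by_cases h : p + q + r = 0
  · rw [phi2_dbr_single_single ht h, phi2_dbr_single_single ht (by rw [← h]; abel),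
      phi2_dbr_single_single ht (by rw [← h]; abel)]
    obtain rfl : r = -(p + q) := eq_neg_of_add_eq_zero_right h
    rw [Matrix.trace_mul_cycle C A B, Matrix.trace_mul_cycle B C A, Matrix.trace_mul_cycle C B A,
      Matrix.trace_mul_cycle A C B]
    simp only [Prod.fst_neg, Prod.snd_neg, Prod.fst_add, Prod.snd_add, Int.cast_add, Int.cast_neg]
    ring_nf
  · simp only [dbr_single_single]
    rw [phi2_single_single_of_add_ne_zero h,
      phi2_single_single_of_add_ne_zero (by rwa [add_rotate, add_rotate]),
      phi2_single_single_of_add_ne_zero (by rwa [add_rotate]), add_zero, add_zero]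

theorem phi2_antisymm (X Y : DT n) : phi2 n t X Y = -phi2 n t Y X := by
  rw [← add_eq_zero_iff_eq_neg]
  revert X
  refine Finsupp.eq_zero_of_map_add_of_map_single _ (fun X X' => ?_) (fun p A => ?_)
  · rw [phi2_add_left, phi2_add_right]; ring
  revert Y
  refine Finsupp.eq_zero_of_map_add_of_map_single _ (fun Y Y' => ?_) (fun q B => ?_)
  · rw [phi2_add_left, phi2_add_right]; ring
  rw [phi2_single_single_antisymm, neg_add_cancel]

theorem phi2_dbr_cyclic (ht : t ≠ 0) (X Y W : DT n) :
    phi2 n t (dbr n t X Y) W + phi2 n t (dbr n t Y W) X + phi2 n t (dbr n t W X) Y = 0 := by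
  revert X
  refine Finsupp.eq_zero_of_map_add_of_map_single _ (fun X X' => ?_) (fun p A => ?_)
  · simp only [dbr_add_left, dbr_add_right, phi2_add_left, phi2_add_right]; ring
  revert Y
  refine Finsupp.eq_zero_of_map_add_of_map_single _ (fun Y Y' => ?_) (fun q B => ?_)
  · simp only [dbr_add_left, dbr_add_right, phi2_add_left, phi2_add_right]; ring
  revert W
  refine Finsupp.eq_zero_of_map_add_of_map_single _ (fun W W' => ?_) (fun r C => ?_)
  · simp only [dbr_add_left, dbr_add_right, phi2_add_left, phi2_add_right]; ring
  exact phi2_dbr_single_cyclic ht p q r A B C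

end

/-- `φ^{(2)}` is a Lie algebra 2-cocycle on `𝔡_t^{(n)}`: it is antisymmetric and
satisfies `φ([X,Y],W) + φ([Y,W],X) + φ([W,X],Y) = 0`. -/
theorem stmt3 (n : ℕ) (t : ℂ) (ht : t ≠ 0) :
    (∀ X Y : DT n, phi2 n t X Y = - phi2 n t Y X) ∧
    (∀ X Y W : DT n,
      phi2 n t (dbr n t X Y) W + phi2 n t (dbr n t Y W) X + phi2 n t (dbr n t W X) Y = 0) :=
  ⟨phi2_antisymm, phi2_dbr_cyclic ht⟩
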